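/- In the state-constraint setup, let (t,x) ∈ [0,T]×ℝ^d and let {τ^ν : ν ∈ 𝓤̄(t,x)} ⊆ 𝓣^t be a family of stopping times. Assume Assumption Ā: for all (t,x), ν ∈ 𝓤̄(t,x), τ ∈ 𝓣^t and P-a.e. ω there exists ν_ω ∈ 𝓤̄(τ(ω), X^ν_{t,x}(τ)(ω)) with E[f(X^ν_{t,x}(T))|𝓕_τ](ω) ≤ F(τ(ω), X^ν_{t,x}(τ)(ω); ν_ω). Then for every measurable function φ : [0,T]×ℝ^d → [−∞,∞] with V̄ ≤ φ, one has E[φ(τ^ν, X^ν_{t,x}(τ^ν))⁻] < ∞ for all ν ∈ 𝓤̄(t,x), and V̄(t,x) ≤ sup_{ν∈𝓤̄(t,x)} E[φ(τ^ν, X^ν_{t,x}(τ^ν))]. -/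

import Mathlib

/-!
By Assumption Ā, `E[f(X_T) | 𝓕_τ] ≤ F(τ, X_τ; ν_ω) ≤ V̄(τ, X_τ) ≤ φ(τ, X_τ)` almost surely. This
integrable lower bound makes `φ(τ, X_τ)⁻` integrable, and taking expectations, with the tower
property on the left, gives `F(t, x; ν) ≤ E[φ(τ, X_τ)]` for every admissible `ν`.
-/

open MeasureTheory Filter Set

/-- The positive part of an extended real number, as an element of `ℝ≥0∞`. -/
noncomputable def erealPos (y : EReal) : ENNReal :=
  if y = ⊤ then ⊤ else ENNReal.ofReal y.toReal

/-- The expectation of an `EReal`-valued random variable, with the convention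
`E[Y] := −∞` whenever `E[Y⁺] = E[Y⁻] = ∞`. -/
noncomputable def eexp {Ω : Type*} [MeasurableSpace Ω] (P : Measure Ω) (Y : Ω → EReal) :
    EReal :=
  ((∫⁻ ω, erealPos (Y ω) ∂P : ENNReal) : EReal) - ((∫⁻ ω, erealPos (-(Y ω)) ∂P : ENNReal) : EReal)

/-- A path `u` is càdlàg on `[a,b]`. -/
def CadlagOn {β : Type*} [TopologicalSpace β] (u : ℝ → β) (a b : ℝ) : Prop :=
  (∀ s ∈ Set.Ico a b, ContinuousWithinAt u (Set.Ici s) s) ∧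
  (∀ s ∈ Set.Ioc a b, ∃ l, Filter.Tendsto u (nhdsWithin s (Set.Iio s)) (nhds l))

lemma erealPos_mono : Monotone erealPos := by
  intro a b hab
  unfold erealPos
  split_ifs with ha hb hb
  · exact le_top
  · exact absurd (top_le_iff.mp (ha ▸ hab)) hb
  · exact le_top
  · rcases eq_or_ne a ⊥ with rfl | ha'
    · simp
    · exact ENNReal.ofReal_le_ofReal (EReal.toReal_le_toReal hab ha' hb)

@[simp]
lemma erealPos_coe (r : ℝ) : erealPos (r : EReal) = ENNReal.ofReal r := by
  simp [erealPos]

section DominatedFromBelow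

variable {Ω : Type*} [MeasurableSpace Ω] {P : Measure Ω} {Z : Ω → ℝ} {Y : Ω → EReal}

lemma lintegral_erealPos_neg_le_of_ae_le (h : ∀ᵐ ω ∂P, (Z ω : EReal) ≤ Y ω) :
    ∫⁻ ω, erealPos (-(Y ω)) ∂P ≤ ∫⁻ ω, ENNReal.ofReal (-(Z ω)) ∂P :=
  lintegral_mono_ae <| h.mono fun ω hω => by
    rw [← erealPos_coe, EReal.coe_neg]
    exact erealPos_mono (EReal.neg_le_neg_iff.mpr hω)

lemma lintegral_ofReal_le_of_ae_le (h : ∀ᵐ ω ∂P, (Z ω : EReal) ≤ Y ω) :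
    ∫⁻ ω, ENNReal.ofReal (Z ω) ∂P ≤ ∫⁻ ω, erealPos (Y ω) ∂P :=
  lintegral_mono_ae <| h.mono fun ω hω => by simpa using erealPos_mono hω

lemma lintegral_erealPos_neg_lt_top_of_ae_le (hZ : Integrable Z P)
    (h : ∀ᵐ ω ∂P, (Z ω : EReal) ≤ Y ω) : ∫⁻ ω, erealPos (-(Y ω)) ∂P < ⊤ :=
  (lintegral_erealPos_neg_le_of_ae_le h).trans_lt hZ.fun_neg.lintegral_lt_top

lemma integral_le_eexp_of_ae_le (hZ : Integrable Z P) (h : ∀ᵐ ω ∂P, (Z ω : EReal) ≤ Y ω) :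
    ((∫ ω, Z ω ∂P : ℝ) : EReal) ≤ eexp P Y := by
  have hneg := lintegral_erealPos_neg_lt_top_of_ae_le hZ h
  rw [integral_eq_lintegral_pos_part_sub_lintegral_neg_part hZ, eexp,
    ← EReal.coe_ennreal_toReal hneg.ne]
  rcases eq_or_ne (∫⁻ ω, erealPos (Y ω) ∂P) ⊤ with hpos | hpos
  · rw [hpos, EReal.coe_ennreal_top, EReal.top_sub_coe]
    exact le_top
  rw [← EReal.coe_ennreal_toReal hpos, ← EReal.coe_sub, EReal.coe_le_coe_iff]
  have hpos_le := (ENNReal.toReal_le_toReal hZ.lintegral_lt_top.ne hpos).mpr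
    (lintegral_ofReal_le_of_ae_le h)
  have hneg_le := (ENNReal.toReal_le_toReal hneg.ne hZ.fun_neg.lintegral_lt_top.ne).mpr
    (lintegral_erealPos_neg_le_of_ae_le h)
  linarith

end DominatedFromBelow

theorem stmt7_general {Ω : Type*} {m0 : MeasurableSpace Ω} (P : Measure Ω) [IsProbabilityMeasure P]
    (T : ℝ) (𝓕 : Filtration ℝ m0) (d : ℕ)
    {𝒰 : Type*}
    (X : ℝ → (Fin d → ℝ) → 𝒰 → ℝ → Ω → (Fin d → ℝ)) (f : (Fin d → ℝ) → ℝ)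
    -- reward function
    (F : ℝ → (Fin d → ℝ) → 𝒰 → ℝ)
    (hF : ∀ t x ν, F t x ν = ∫ ω, f (X t x ν T ω) ∂P)
    -- the open state constraint set, admissible controls and value function
    (Ubar : ℝ → (Fin d → ℝ) → Set 𝒰)
    (Vbar : ℝ → (Fin d → ℝ) → EReal)
    (hVbar : ∀ t x, Vbar t x = ⨆ ν ∈ Ubar t x, ((F t x ν : ℝ) : EReal))
    -- the subfiltrations `𝔽^t`
    (𝓖 : ℝ → Filtration ℝ m0)
    -- Assumption Ā
    (hA : ∀ t' ∈ Icc 0 T, ∀ (x' : Fin d → ℝ), ∀ ν' ∈ Ubar t' x',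
      ∀ (τ' : Ω → ℝ), IsStoppingTime (𝓖 t') (fun ω => (τ' ω : WithTop ℝ)) →
      ∀ (hτ' : IsStoppingTime 𝓕 (fun ω => (τ' ω : WithTop ℝ))),
      (∀ ω, τ' ω ∈ Icc t' T) →
      ∀ᵐ ω ∂P, ∃ ν'' ∈ Ubar (τ' ω) (X t' x' ν' (τ' ω) ω),
        (P[fun ω' => f (X t' x' ν' T ω')|hτ'.measurableSpace]) ω ≤
          F (τ' ω) (X t' x' ν' (τ' ω) ω) ν'')
    -- the data of the theorem
    (t : ℝ) (ht : t ∈ Icc 0 T) (x : Fin d → ℝ)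
    (τf : 𝒰 → Ω → ℝ)
    (hτf : ∀ ν ∈ Ubar t x, IsStoppingTime (𝓖 t) (fun ω => (τf ν ω : WithTop ℝ)) ∧
      IsStoppingTime 𝓕 (fun ω => (τf ν ω : WithTop ℝ)) ∧
      ∀ ω, τf ν ω ∈ Icc t T)
    (φ : ℝ × (Fin d → ℝ) → EReal)
    (hVφ : ∀ t' x', Vbar t' x' ≤ φ (t', x')) :
    (∀ ν ∈ Ubar t x,
      (∫⁻ ω, erealPos (-(φ (τf ν ω, X t x ν (τf ν ω) ω))) ∂P) < ⊤) ∧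
    Vbar t x ≤ ⨆ ν ∈ Ubar t x, eexp P (fun ω => φ (τf ν ω, X t x ν (τf ν ω) ω)) := by
  have condExp_le_φ : ∀ ν (hν : ν ∈ Ubar t x), ∀ᵐ ω ∂P,
      ((P[fun ω' => f (X t x ν T ω')|(hτf ν hν).2.1.measurableSpace] ω : ℝ) : EReal) ≤
        φ (τf ν ω, X t x ν (τf ν ω) ω) := by
    intro ν hν
    obtain ⟨hτ𝓖, hτ𝓕, hτ_mem⟩ := hτf ν hν
    filter_upwards [hA t ht x ν hν (τf ν) hτ𝓖 hτ𝓕 hτ_mem] with ω ⟨ν', hν', hle⟩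
    refine (EReal.coe_le_coe_iff.mpr hle).trans (le_trans ?_ (hVφ _ _))
    rw [hVbar]
    exact le_iSup₂_of_le ν' hν' le_rfl
  refine ⟨fun ν hν => lintegral_erealPos_neg_lt_top_of_ae_le integrable_condExp
    (condExp_le_φ ν hν), ?_⟩
  rw [hVbar]
  refine iSup₂_mono fun ν hν => ?_
  rw [hF, ← integral_condExp (hτf ν hν).2.1.measurableSpace_le]
  exact integral_le_eexp_of_ae_le integrable_condExp (condExp_le_φ ν hν)

/-- **Theorem 3.1 (i)** (state constraints, easy direction). In the state-constraint setup,
under Assumption Ā, for any measurable `φ : [0,T]×ℝ^d → [−∞,∞]` with `V̄ ≤ φ`, the negative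
parts `φ(τ^ν, X^ν_{t,x}(τ^ν))⁻` are integrable for all `ν ∈ 𝓤̄(t,x)` and
`V̄(t,x) ≤ sup_{ν∈𝓤̄(t,x)} E[φ(τ^ν, X^ν_{t,x}(τ^ν))]`. -/
theorem stmt7 {Ω : Type*} {m0 : MeasurableSpace Ω} (P : Measure Ω) [IsProbabilityMeasure P]
    (T : ℝ) (hT : 0 < T) (𝓕 : Filtration ℝ m0) (d : ℕ)
    {𝒰 : Type*} (Uat : ℝ → Set 𝒰)
    (X : ℝ → (Fin d → ℝ) → 𝒰 → ℝ → Ω → (Fin d → ℝ)) (f : (Fin d → ℝ) → ℝ)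
    (hfmeas : Measurable f)
    -- the controlled state processes are càdlàg and adapted
    (hXcadlag : ∀ t ∈ Icc 0 T, ∀ (x : Fin d → ℝ), ∀ ν ∈ Uat t, ∀ ω,
      CadlagOn (fun s => X t x ν s ω) t T)
    (hXadapted : ∀ t ∈ Icc 0 T, ∀ (x : Fin d → ℝ), ∀ ν ∈ Uat t, ∀ s ∈ Icc t T,
      StronglyMeasurable[𝓕 s] (X t x ν s))
    -- integrability of the reward
    (hfInt : ∀ t ∈ Icc 0 T, ∀ (x : Fin d → ℝ), ∀ ν ∈ Uat t,
      Integrable (fun ω => f (X t x ν T ω)) P)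
    -- reward function
    (F : ℝ → (Fin d → ℝ) → 𝒰 → ℝ)
    (hF : ∀ t x ν, F t x ν = ∫ ω, f (X t x ν T ω) ∂P)
    -- the open state constraint set, admissible controls and value function
    (𝒪 : Set (Fin d → ℝ)) (h𝒪 : IsOpen 𝒪)
    (Ubar : ℝ → (Fin d → ℝ) → Set 𝒰)
    (hUbar : ∀ t x, Ubar t x =
      {ν ∈ Uat t | ∀ᵐ ω ∂P, ∀ s ∈ Icc t T, X t x ν s ω ∈ 𝒪})
    (Vbar : ℝ → (Fin d → ℝ) → EReal)
    (hVbar : ∀ t x, Vbar t x = ⨆ ν ∈ Ubar t x, ((F t x ν : ℝ) : EReal))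
    -- the subfiltrations `𝔽^t`
    (𝓖 : ℝ → Filtration ℝ m0) (h𝓖 : ∀ t s, 𝓖 t s ≤ 𝓕 s)
    (hXadapted' : ∀ t ∈ Icc 0 T, ∀ (x : Fin d → ℝ), ∀ ν ∈ Uat t, ∀ s ∈ Icc t T,
      StronglyMeasurable[𝓖 t s] (X t x ν s))
    -- Assumption Ā
    (hA : ∀ t' ∈ Icc 0 T, ∀ (x' : Fin d → ℝ), ∀ ν' ∈ Ubar t' x',
      ∀ (τ' : Ω → ℝ), IsStoppingTime (𝓖 t') (fun ω => (τ' ω : WithTop ℝ)) →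
      ∀ (hτ' : IsStoppingTime 𝓕 (fun ω => (τ' ω : WithTop ℝ))),
      (∀ ω, τ' ω ∈ Icc t' T) →
      ∀ᵐ ω ∂P, ∃ ν'' ∈ Ubar (τ' ω) (X t' x' ν' (τ' ω) ω),
        (P[fun ω' => f (X t' x' ν' T ω')|hτ'.measurableSpace]) ω ≤
          F (τ' ω) (X t' x' ν' (τ' ω) ω) ν'')
    -- the data of the theorem
    (t : ℝ) (ht : t ∈ Icc 0 T) (x : Fin d → ℝ)
    (τf : 𝒰 → Ω → ℝ)
    (hτf : ∀ ν ∈ Ubar t x, IsStoppingTime (𝓖 t) (fun ω => (τf ν ω : WithTop ℝ)) ∧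
      IsStoppingTime 𝓕 (fun ω => (τf ν ω : WithTop ℝ)) ∧
      ∀ ω, τf ν ω ∈ Icc t T)
    (φ : ℝ × (Fin d → ℝ) → EReal) (hφmeas : Measurable φ)
    (hVφ : ∀ t' x', Vbar t' x' ≤ φ (t', x')) :
    (∀ ν ∈ Ubar t x,
      (∫⁻ ω, erealPos (-(φ (τf ν ω, X t x ν (τf ν ω) ω))) ∂P) < ⊤) ∧
    Vbar t x ≤ ⨆ ν ∈ Ubar t x, eexp P (fun ω => φ (τf ν ω, X t x ν (τf ν ω) ω)) :=
  stmt7_general P T 𝓕 d X f F hF Ubar Vbar hVbar 𝓖 hA t ht x τf hτf φ hVφ
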